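/- Let A be a 2×(m+1) matrix with entries in {±1,…,±n} and distinct columns. If some row of A contains both α and −α for some α ∈ {1,…,n}, then A is invalid: there exists nonzero b ∈ ℝ² such that the convex hull of the columns of the induced matrix M(A,b) contains the origin. -/

import Mathlib

/-! With `b = e_i` the columns of `M(A,b)` are the signed basis vectors given by row `i`, so
entries `α` and `−α` in that row yield two opposite columns, whose midpoint is the origin. -/

/-- The vector in `ℝⁿ` corresponding to an entry `a = s·I` with `s ∈ {±1}`,
`I ∈ {1,…,n}`: the signed standard basis vector `s • e_I`. -/
def entryVec (n : ℕ) (a : ℤ) : EuclideanSpace ℝ (Fin n) :=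
  WithLp.toLp 2 (fun i : Fin n => if ((i : ℕ) : ℤ) + 1 = a then (1 : ℝ) else if ((i : ℕ) : ℤ) + 1 = -a then -1 else 0)

/-- The `j`-th column of the induced matrix `M(A,b)` of a `2 × (m+1)` matrix `A` with
entries in `{±1,…,±n}` and `b ∈ ℝ²`. -/
noncomputable def inducedCol (n m : ℕ) (A : Fin 2 → Fin (m + 1) → ℤ) (b : Fin 2 → ℝ) :
    Fin (m + 1) → EuclideanSpace ℝ (Fin n) :=
  fun j => b 0 • entryVec n (A 0 j) + b 1 • entryVec n (A 1 j)

/-- `A` is valid if for every nonzero `b ∈ ℝ²` the convex hull of the columns of the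
induced matrix `M(A,b)` does not contain the origin. -/
def IsValid (n m : ℕ) (A : Fin 2 → Fin (m + 1) → ℤ) : Prop :=
  ∀ b : Fin 2 → ℝ, b ≠ 0 →
    (0 : EuclideanSpace ℝ (Fin n)) ∉ convexHull ℝ (Set.range (inducedCol n m A b))

/-- A circuit in a `k × (m+1)` matrix: distinct rows `i₀, i₁` and distinct columns
`j₁,…,j_p` with `a_{i₁,j_α} = a_{i₀,j_{α+1}}` cyclically. -/
def HasCircuit {k m : ℕ} (A : Fin k → Fin (m + 1) → ℤ) : Prop :=
  ∃ i₀ i₁ : Fin k, i₀ ≠ i₁ ∧ ∃ p : ℕ, ∃ j : Fin (p + 1) → Fin (m + 1),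
    Function.Injective j ∧ ∀ α, A i₁ (j α) = A i₀ (j (α + 1))

/-- An anti-circuit: as a circuit, but with `a_{i₁,j_α} = −a_{i₀,j_{α+1}}` cyclically. -/
def HasAntiCircuit {k m : ℕ} (A : Fin k → Fin (m + 1) → ℤ) : Prop :=
  ∃ i₀ i₁ : Fin k, i₀ ≠ i₁ ∧ ∃ p : ℕ, ∃ j : Fin (p + 1) → Fin (m + 1),
    Function.Injective j ∧ ∀ α, A i₁ (j α) = -(A i₀ (j (α + 1)))

theorem zero_mem_convexHull_of_mem_of_neg_mem {E : Type*} [AddCommGroup E] [Module ℝ E]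
    {s : Set E} {x : E} (hx : x ∈ s) (hnx : -x ∈ s) : (0 : E) ∈ convexHull ℝ s := by
  rw [← midpoint_self_neg ℝ x]
  exact segment_subset_convexHull hx hnx (midpoint_mem_segment _ _)

-- An index `i + 1 ≥ 1` never equals both `a` and `-a`, so the branches of `entryVec` never clash.
theorem entryVec_neg (n : ℕ) (a : ℤ) : entryVec n (-a) = -entryVec n a := by
  ext i
  simp only [entryVec, neg_neg, PiLp.neg_apply, PiLp.toLp_apply]
  split_ifs <;> first | omega | norm_num

theorem inducedCol_single (n m : ℕ) (A : Fin 2 → Fin (m + 1) → ℤ) (i : Fin 2)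
    (j : Fin (m + 1)) : inducedCol n m A (Pi.single i 1) j = entryVec n (A i j) := by
  fin_cases i <;> simp [inducedCol]

theorem stmt11_general (n m : ℕ) (A : Fin 2 → Fin (m + 1) → ℤ)
    (hrow : ∃ i : Fin 2, ∃ j₁ j₂ : Fin (m + 1), A i j₁ = -(A i j₂)) :
    ∃ b : Fin 2 → ℝ, b ≠ 0 ∧
      (0 : EuclideanSpace ℝ (Fin n)) ∈ convexHull ℝ (Set.range (inducedCol n m A b)) := by
  obtain ⟨i, j₁, j₂, hij⟩ := hrow
  refine ⟨Pi.single i 1, by simp, zero_mem_convexHull_of_mem_of_neg_mem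
    (x := entryVec n (A i j₂)) ⟨j₂, inducedCol_single n m A i j₂⟩ ⟨j₁, ?_⟩⟩
  rw [inducedCol_single, hij, entryVec_neg]

/-- if a row of a `2 × (m+1)` matrix with entries in `{±1,…,±n}` and
distinct columns contains both `α` and `−α` for some `α ∈ {1,…,n}`, then the matrix is
invalid: for some nonzero `b ∈ ℝ²` the convex hull of the columns of `M(A,b)` contains
the origin. -/
theorem stmt11 (n m : ℕ) (A : Fin 2 → Fin (m + 1) → ℤ)
    (hA : ∀ i j, 1 ≤ |A i j| ∧ |A i j| ≤ (n : ℤ))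
    (hcol : Function.Injective (fun j => fun i => A i j))
    (hrow : ∃ i : Fin 2, ∃ j₁ j₂ : Fin (m + 1), A i j₁ = -(A i j₂)) :
    ∃ b : Fin 2 → ℝ, b ≠ 0 ∧
      (0 : EuclideanSpace ℝ (Fin n)) ∈ convexHull ℝ (Set.range (inducedCol n m A b)) :=
  stmt11_general n m A hrow
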